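/- arXiv:1904.07284 — 2 statements merged into one kernel-verified Lean document; each statement's English description precedes it below -/
import Mathlib

section
/- Let F > 1, λ₀ ≥ 1, and Λ ≥ λ₀. Under the original one-fifth rule starting from λ₀, the number of consecutive unsuccessful iterations needed for λ to reach Λ is ⌈4·log_F(Λ/λ₀)⌉. Under the modified rule with rollbacks and initial span length 10, the number of iterations needed to reach Λ is at least Σ_{d=10}^{m−1} d + m ≥ (m² − 100)/2 where m = ⌈4·log_F(Λ/λ₀)⌉ ≥ 10, hence the modified rule requires Ω(m²) iterations. -/
open Real Finset

lemma sum_Ico_aux' : ∀ k : ℕ,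
    (∑ d ∈ Finset.Ico (10 : ℤ) (10 + k), (d : ℝ)) * 2 =
      ((10 + k : ℤ) : ℝ) ^ 2 - ((10 + k : ℤ) : ℝ) - 90 := by
  intro k
  induction k with
  | zero => norm_num
  | succ n ih =>
    have : (10 + (n + 1 : ℕ) : ℤ) = (10 + n) + 1 := by push_cast; ring
    have hins : Finset.Ico (10:ℤ) (10 + n + 1) = insert ((10:ℤ) + n) (Finset.Ico (10:ℤ) (10 + n)) :=
      Finset.ext fun x => by simp only [Finset.mem_Ico, Finset.mem_insert]; omega
    rw [this, hins, Finset.sum_insert Finset.right_notMem_Ico]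
    push_cast at ih ⊢
    ring_nf at ih ⊢
    linarith

lemma sum_Ico_aux (m : ℤ) (hm : 10 ≤ m) :
    (∑ d ∈ Finset.Ico (10 : ℤ) m, (d : ℝ)) * 2 = (m : ℝ) ^ 2 - m - 90 := by
  obtain ⟨k, rfl⟩ : ∃ k : ℕ, m = 10 + k := ⟨(m - 10).toNat, by omega⟩
  exact sum_Ico_aux' k

theorem stmt_5 (F lam0 Lam : ℝ) (hF : 1 < F) (hlam0 : 1 ≤ lam0) (hLam : lam0 ≤ Lam)
    (m : ℤ) (hm : m = ⌈4 * Real.logb F (Lam / lam0)⌉) (hm10 : 10 ≤ m) :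
    (∀ n : ℕ, Lam ≤ lam0 * F ^ ((n : ℝ) / 4) ↔ m ≤ (n : ℤ)) ∧
    ((m : ℝ) ^ 2 - 100) / 2 ≤ (∑ d ∈ Finset.Ico (10 : ℤ) m, (d : ℝ)) + (m : ℝ) := by
  have hl0 : (0:ℝ) < lam0 := lt_of_lt_of_le one_pos hlam0
  have hF0 : (0:ℝ) < F := lt_trans one_pos hF
  have hL : 0 < Lam / lam0 := div_pos (lt_of_lt_of_le hl0 hLam) hl0
  constructor
  · intro n
    rw [hm, Int.ceil_le]
    have h1 : Lam ≤ lam0 * F ^ ((n : ℝ) / 4) ↔ Lam / lam0 ≤ F ^ ((n : ℝ) / 4) := by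
      rw [div_le_iff₀ hl0, mul_comm]
    rw [h1]
    conv_lhs => rw [← Real.rpow_logb hF0 (ne_of_gt hF) hL]
    rw [Real.rpow_le_rpow_left_iff hF, le_div_iff₀ (by norm_num : (0:ℝ) < 4)]
    push_cast
    rw [mul_comm]
  · have := sum_Ico_aux m hm10
    have hmr : (10:ℝ) ≤ (m:ℝ) := by exact_mod_cast hm10
    nlinarith
end

section
/- Under the modified rollback rule, within the span of length d (so iterations B = 1, …, d starting from base λ₀ with λ = λ₀·F^{B/4}), the multiset of λ-values used includes every value λ₀·F^{j/4} for 0 ≤ j ≤ d; consequently, for any target value μ with λ₀ ≤ μ ≤ λ₀·F^{d/4}, some iteration in the span uses a λ within a multiplicative factor F^{1/4} of μ. -/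
open Real Finset

theorem stmt_15 (F lam0 : ℝ) (hF : 1 < F) (hlam0 : 0 < lam0) (d : ℕ) :
    (∀ j : ℕ, j ≤ d →
      lam0 * F ^ ((j : ℝ) / 4) ∈
        (Finset.Icc 0 d).image (fun B : ℕ => lam0 * F ^ ((B : ℝ) / 4))) ∧
    (∀ μ : ℝ, lam0 ≤ μ → μ ≤ lam0 * F ^ ((d : ℝ) / 4) →
      ∃ B ∈ Finset.Icc 0 d,
        lam0 * F ^ ((B : ℝ) / 4) ≤ μ * F ^ ((1 : ℝ) / 4) ∧
        μ ≤ lam0 * F ^ ((B : ℝ) / 4) * F ^ ((1 : ℝ) / 4)) := by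
  have hF0 : (0:ℝ) < F := lt_trans one_pos hF
  constructor
  · intro j hj
    exact Finset.mem_image.mpr ⟨j, Finset.mem_Icc.mpr ⟨Nat.zero_le _, hj⟩, rfl⟩
  · intro μ h1 h2
    have hμ0 : 0 < μ := lt_of_lt_of_le hlam0 h1
    obtain ⟨t, ht⟩ : ∃ t : ℝ, t = 4 * Real.logb F (μ / lam0) := ⟨_, rfl⟩
    have hquot : (1:ℝ) ≤ μ / lam0 := (one_le_div hlam0).mpr h1
    have ht0 : 0 ≤ t := by
      have := Real.logb_nonneg hF hquot
      rw [ht]; linarith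
    have hkey : F ^ (t / 4) = μ / lam0 := by
      rw [ht]
      have : 4 * Real.logb F (μ / lam0) / 4 = Real.logb F (μ / lam0) := by ring
      rw [this, Real.rpow_logb hF0 (ne_of_gt hF) (div_pos hμ0 hlam0)]
    have hμeq : μ = lam0 * F ^ (t / 4) := by
      rw [hkey]; field_simp
    have htd : t ≤ d := by
      by_contra hc
      push_neg at hc
      have : lam0 * F ^ ((d:ℝ)/4) < lam0 * F ^ (t/4) := by
        apply mul_lt_mul_of_pos_left _ hlam0
        exact Real.rpow_lt_rpow_left_iff hF |>.mpr (by linarith)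
      rw [← hμeq] at this
      linarith
    have hcast : ((⌊t⌋.toNat : ℕ) : ℝ) = (⌊t⌋ : ℝ) := by
      exact_mod_cast Int.toNat_of_nonneg (Int.floor_nonneg.mpr ht0)
    refine ⟨⌊t⌋.toNat, Finset.mem_Icc.mpr ⟨Nat.zero_le _, ?_⟩, ?_, ?_⟩
    · have h' : (⌊t⌋:ℝ) ≤ (d:ℝ) := le_trans (Int.floor_le t) htd
      have : ⌊t⌋ ≤ (d:ℤ) := by exact_mod_cast h'
      omega
    · have hB : ((⌊t⌋.toNat : ℕ) : ℝ) ≤ t := by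
        rw [hcast]; exact Int.floor_le t
      have : lam0 * F ^ ((⌊t⌋.toNat : ℝ)/4) ≤ lam0 * F ^ (t/4) := by
        apply mul_le_mul_of_nonneg_left _ (le_of_lt hlam0)
        exact Real.rpow_le_rpow_left_iff hF |>.mpr (by linarith)
      rw [← hμeq] at this
      have hFq : (1:ℝ) ≤ F ^ ((1:ℝ)/4) := Real.one_le_rpow hF.le (by norm_num)
      nlinarith [mul_pos hlam0 (Real.rpow_pos_of_pos hF0 ((⌊t⌋.toNat : ℝ)/4))]
    · have hB : t ≤ ((⌊t⌋.toNat : ℕ) : ℝ) + 1 := by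
        rw [hcast]; linarith [Int.lt_floor_add_one t]
      rw [mul_assoc, ← Real.rpow_add hF0]
      calc μ = lam0 * F ^ (t/4) := hμeq
        _ ≤ lam0 * F ^ ((⌊t⌋.toNat : ℝ)/4 + 1/4) := by
            apply mul_le_mul_of_nonneg_left _ (le_of_lt hlam0)
            exact Real.rpow_le_rpow_left_iff hF |>.mpr (by linarith)
end
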